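/- In the discrete weighted stochastic block model with two communities A, B of size n over alphabet {0, ..., L} (p_n(0) = 1 − u log n/n, p_n(ℓ) = a_ℓ log n/n, q_n(0) = 1 − v log n/n, q_n(ℓ) = b_ℓ log n/n, a_ℓ, b_ℓ > 0), let d_n(ℓ) = log(p_n(ℓ)/q_n(ℓ)), γ(n) = (log n)^{(log n)^{2/3}}, δ(n) = √(log n)/log log n, and let H be a fixed subset of A of size n/γ(n). Define the event Δ = { for all nodes i ∈ H, S(i, H) < δ(n) }, where S(i, H) = Σ_{j ∈ H, j ≠ i} d_n(w_{ij}). Then for all sufficiently large n, P(Δ) ≥ 9/10. -/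

import Mathlib

/-!
STATEMENT 15: In the discrete weighted stochastic block model with two communities `A`,
`B` of size `n` over the alphabet `{0, …, L}` (all `a_ℓ, b_ℓ > 0`), with
`d_n(ℓ) = log(p_n(ℓ)/q_n(ℓ))`, `γ(n) = (log n)^{(log n)^{2/3}}`,
`δ(n) = √(log n) / log log n`, and `H ⊆ A` a fixed subset of size `n / γ(n)`:
for all sufficiently large `n`, the event
`Δ = {∀ i ∈ H, S(i, H) < δ(n)}` has probability at least `9/10`.
-/

open MeasureTheory Filter
open scoped ENNReal

namespace SBM15

/-- Real mass function on the color alphabet `{0, …, L}` with parameter vector `c`. -/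
noncomputable def mass (L : ℕ) (c : Fin L → ℝ) (n : ℕ) : Fin (L + 1) → ℝ :=
  Fin.cases (1 - (∑ j, c j) * Real.log n / n) fun j => c j * Real.log n / n

/-- The corresponding distribution on the color alphabet. -/
noncomputable def colDist (L : ℕ) (c : Fin L → ℝ) (n : ℕ) : Measure (Fin (L + 1)) :=
  ∑ ℓ : Fin (L + 1), ENNReal.ofReal (mass L c n ℓ) • Measure.dirac ℓ

/-- Edges of the complete graph on the `2 n` vertices. -/
abbrev Edge (n : ℕ) := {e : Fin (2 * n) × Fin (2 * n) // e.1 < e.2}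

/-- The ground-truth community assignment. -/
def truth (n : ℕ) (i : Fin (2 * n)) : Bool := decide (i.val < n)

/-- The first community `A`. -/
def comA (n : ℕ) : Finset (Fin (2 * n)) := Finset.univ.filter fun i => i.val < n

/-- The second community `B`. -/
def comB (n : ℕ) : Finset (Fin (2 * n)) := Finset.univ.filter fun i => ¬ i.val < n

/-- Distribution of the color of one edge. -/
noncomputable def edgeMeasure (n L : ℕ) (a b : Fin L → ℝ) (e : Edge n) :
    Measure (Fin (L + 1)) :=
  if truth n e.1.1 = truth n e.1.2 then colDist L a n else colDist L b n

/-- The law of the colored random graph: all edge colors independent. -/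
noncomputable def sbm (n L : ℕ) (a b : Fin L → ℝ) : Measure (Edge n → Fin (L + 1)) :=
  Measure.pi (edgeMeasure n L a b)

/-- The color of the (unordered) edge `{i, j}`. -/
def wfun {n : ℕ} {L : ℕ} (w : Edge n → Fin (L + 1)) (i j : Fin (2 * n)) : Fin (L + 1) :=
  if h : i < j then w ⟨(i, j), h⟩ else if h' : j < i then w ⟨(j, i), h'⟩ else 0

/-- Likelihood of the observed colors `w` under the assignment `σ`. -/
noncomputable def likelihood (n L : ℕ) (a b : Fin L → ℝ) (σ : Fin (2 * n) → Bool)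
    (w : Edge n → Fin (L + 1)) : ℝ≥0∞ :=
  ∏ e : Edge n,
    if σ e.1.1 = σ e.1.2 then ENNReal.ofReal (mass L a n (w e))
    else ENNReal.ofReal (mass L b n (w e))

/-- A community assignment is balanced if each community has exactly `n` nodes. -/
def balanced (n : ℕ) (σ : Fin (2 * n) → Bool) : Prop :=
  (Finset.univ.filter fun i => σ i = true).card = n

/-- `σ` coincides with the true partition, up to swapping the two labels. -/
def equivTruth (n : ℕ) (σ : Fin (2 * n) → Bool) : Prop :=
  σ = truth n ∨ σ = fun i => !(truth n i)

/-- The log-likelihood ratio `d_n(ℓ) = log (p_n(ℓ) / q_n(ℓ))` of a single color. -/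
noncomputable def d (n L : ℕ) (a b : Fin L → ℝ) (ℓ : Fin (L + 1)) : ℝ :=
  Real.log (mass L a n ℓ / mass L b n ℓ)

/-- `S(i, H) = ∑_{j ∈ H, j ≠ i} d_n(w_ij)`. -/
noncomputable def S (n L : ℕ) (a b : Fin L → ℝ) (w : Edge n → Fin (L + 1))
    (i : Fin (2 * n)) (H : Finset (Fin (2 * n))) : ℝ :=
  ∑ j ∈ H.erase i, d n L a b (wfun w i j)

/-- `γ(n) = (log n)^{(log n)^{2/3}}`. -/
noncomputable def gam (n : ℕ) : ℝ := Real.log n ^ (Real.log n ^ ((2 : ℝ) / 3))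

/-- `δ(n) = √(log n) / log log n`. -/
noncomputable def del (n : ℕ) : ℝ := Real.sqrt (Real.log n) / Real.log (Real.log n)

/-!
Nonzero colors have probability `Θ(log n / n)`, so a vertex of `H` (of size `n / γ(n)`)
expects only `log n / γ(n)` nonzero-colored edges into `H`. The color `0` contributes
`d_n(0) = O(log n / n)` per edge, hence `o(1)` in total, and a nonzero color `ℓ` contributes
`log (a_ℓ / b_ℓ)`. So `S(i, H) ≥ δ(n)` forces at least `K = ⌈(log n)^{2/5}⌉` nonzero-colored
edges from `i` into `H`. A union bound over `i` and over the `K`-subsets of `H` bounds the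
probability of this by `|H| (|H| p)^K` with `p = (∑ a_ℓ) log n / n`, which is at most
`n γ(n)^{-K/2}`; this tends to `0` because `log γ(n) = (log n)^{2/3} log log n` and
`2/5 + 2/3 > 1`.
-/

open Finset Topology

@[simp]
lemma mass_zero (L : ℕ) (c : Fin L → ℝ) (n : ℕ) :
    mass L c n 0 = 1 - (∑ j, c j) * Real.log n / n := rfl

@[simp]
lemma mass_succ (L : ℕ) (c : Fin L → ℝ) (n : ℕ) (j : Fin L) :
    mass L c n j.succ = c j * Real.log n / n := rfl

section ColorDistribution

variable {L : ℕ} {c : Fin L → ℝ} {n : ℕ}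

lemma sum_mass : ∑ ℓ, mass L c n ℓ = 1 := by
  simp only [Fin.sum_univ_succ, mass_zero, mass_succ, ← Finset.sum_div, ← Finset.sum_mul]
  ring

lemma mass_nonneg (hc : ∀ j, 0 ≤ c j) (hcn : (∑ j, c j) * Real.log n / n ≤ 1)
    (ℓ : Fin (L + 1)) : 0 ≤ mass L c n ℓ := by
  cases ℓ using Fin.cases with
  | zero => rw [mass_zero]; linarith
  | succ j => rw [mass_succ]; have := hc j; have := Real.log_natCast_nonneg n; positivity

lemma colDist_apply (s : Set (Fin (L + 1))) :
    colDist L c n s = ∑ ℓ, ENNReal.ofReal (mass L c n ℓ) * s.indicator 1 ℓ := by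
  simp [colDist, Measure.finsetSum_apply]

lemma isProbabilityMeasure_colDist (hc : ∀ j, 0 ≤ c j)
    (hcn : (∑ j, c j) * Real.log n / n ≤ 1) : IsProbabilityMeasure (colDist L c n) := by
  constructor
  simp only [colDist_apply, Set.indicator_univ, Pi.one_apply, mul_one]
  rw [← ENNReal.ofReal_sum_of_nonneg fun ℓ _ => mass_nonneg hc hcn ℓ, sum_mass,
    ENNReal.ofReal_one]

lemma colDist_compl_zero (hc : ∀ j, 0 ≤ c j) :
    colDist L c n {0}ᶜ = ENNReal.ofReal ((∑ j, c j) * Real.log n / n) := by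
  have hnn : ∀ j ∈ Finset.univ, 0 ≤ c j * Real.log n / n := fun j _ => by
    have := hc j; have := Real.log_natCast_nonneg n; positivity
  simp [colDist_apply, Fin.sum_univ_succ, Set.indicator_apply, Fin.succ_ne_zero,
    ← ENNReal.ofReal_sum_of_nonneg hnn, ← Finset.sum_div, ← Finset.sum_mul]

end ColorDistribution

lemma eventually_mul_log_div_le (c : ℝ) {ε : ℝ} (hε : 0 < ε) :
    ∀ᶠ n : ℕ in atTop, c * Real.log n / n ≤ ε := by
  have hlim : Tendsto (fun x : ℝ => c * (Real.log x / x)) atTop (𝓝 0) := by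
    simpa using (Real.tendsto_pow_log_div_mul_add_atTop 1 0 1 one_ne_zero).const_mul c
  filter_upwards [(hlim.comp tendsto_natCast_atTop_atTop).eventually (eventually_le_nhds hε)]
    with n hn
  simpa [mul_div_assoc] using hn

lemma eventually_isProbabilityMeasure_colDist {L : ℕ} {c : Fin L → ℝ}
    (hc : ∀ j, 0 ≤ c j) : ∀ᶠ n : ℕ in atTop, IsProbabilityMeasure (colDist L c n) := by
  filter_upwards [eventually_mul_log_div_le (∑ j, c j) one_pos] with n hn
  exact isProbabilityMeasure_colDist hc hn

section Graph

variable {n L : ℕ}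

lemma wfun_fst_snd (w : Edge n → Fin (L + 1)) (e : Edge n) : wfun w e.1.1 e.1.2 = w e := by
  simp [wfun, e.2]

lemma wfun_snd_fst (w : Edge n → Fin (L + 1)) (e : Edge n) : wfun w e.1.2 e.1.1 = w e := by
  simp [wfun, e.2, not_lt_of_gt e.2]

lemma edgeMeasure_of_mem_comA {a b : Fin L → ℝ} {e : Edge n} (h₁ : e.1.1 ∈ comA n)
    (h₂ : e.1.2 ∈ comA n) : edgeMeasure n L a b e = colDist L a n := by
  simp only [comA, mem_filter, mem_univ, true_and] at h₁ h₂
  simp [edgeMeasure, truth, h₁, h₂]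

def starEdges (i : Fin (2 * n)) (T : Finset (Fin (2 * n))) : Finset (Edge n) :=
  univ.filter fun e => (e.1.1 = i ∧ e.1.2 ∈ T) ∨ (e.1.2 = i ∧ e.1.1 ∈ T)

lemma card_le_card_starEdges {i : Fin (2 * n)} {T : Finset (Fin (2 * n))} (hi : i ∉ T) :
    T.card ≤ (starEdges i T).card := by
  refine card_le_card_of_surjOn (fun e : Edge n => if e.1.1 = i then e.1.2 else e.1.1) ?_
  intro j (hj : j ∈ T)
  have hij : i ≠ j := fun h => hi (h ▸ hj)
  rcases hij.lt_or_gt with h | h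
  · exact ⟨⟨(i, j), h⟩, by simp [starEdges, hj], by simp⟩
  · exact ⟨⟨(j, i), h⟩, by simp [starEdges, hj], by simp [hij.symm]⟩

lemma setOf_forall_wfun_ne_zero_subset (i : Fin (2 * n)) (T : Finset (Fin (2 * n))) :
    {w : Edge n → Fin (L + 1) | ∀ j ∈ T, wfun w i j ≠ 0} ⊆
      (starEdges i T : Set (Edge n)).pi fun _ => {0}ᶜ := by
  intro w hw e he
  simp only [starEdges, coe_filter, mem_univ, true_and, Set.mem_ofPred_eq] at he
  rcases he with ⟨rfl, hj⟩ | ⟨rfl, hj⟩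
  · simpa [wfun_fst_snd] using hw _ hj
  · simpa [wfun_snd_fst] using hw _ hj

variable {a b : Fin L → ℝ} [IsProbabilityMeasure (colDist L a n)]
  [IsProbabilityMeasure (colDist L b n)]

instance isProbabilityMeasure_edgeMeasure (e : Edge n) :
    IsProbabilityMeasure (edgeMeasure n L a b e) := by
  unfold edgeMeasure
  split_ifs <;> infer_instance

instance isProbabilityMeasure_sbm : IsProbabilityMeasure (sbm n L a b) := by
  unfold sbm
  infer_instance

lemma sbm_forall_wfun_ne_zero_le {i : Fin (2 * n)} {T : Finset (Fin (2 * n))}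
    (hi : i ∈ comA n) (hT : T ⊆ comA n) (hiT : i ∉ T) :
    sbm n L a b {w | ∀ j ∈ T, wfun w i j ≠ 0} ≤ colDist L a n {0}ᶜ ^ T.card := by
  have hA : ∀ e ∈ starEdges i T, edgeMeasure n L a b e = colDist L a n := by
    intro e he
    simp only [starEdges, mem_filter, mem_univ, true_and] at he
    rcases he with ⟨rfl, hj⟩ | ⟨rfl, hj⟩
    · exact edgeMeasure_of_mem_comA hi (hT hj)
    · exact edgeMeasure_of_mem_comA (hT hj) hi
  calc sbm n L a b {w | ∀ j ∈ T, wfun w i j ≠ 0}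
      ≤ sbm n L a b ((starEdges i T : Set (Edge n)).pi fun _ => {0}ᶜ) :=
        measure_mono (setOf_forall_wfun_ne_zero_subset i T)
    _ = colDist L a n {0}ᶜ ^ (starEdges i T).card := by
        rw [sbm, Measure.pi_pi_finset, prod_congr rfl fun e he => by rw [hA e he], prod_const]
    _ ≤ colDist L a n {0}ᶜ ^ T.card :=
        pow_le_pow_right_of_le_one' prob_le_one (card_le_card_starEdges hiT)

end Graph

section Degree

variable {n L : ℕ}

def nonzeroDegree (w : Edge n → Fin (L + 1)) (i : Fin (2 * n)) (H : Finset (Fin (2 * n))) : ℕ :=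
  ((H.erase i).filter fun j => wfun w i j ≠ 0).card

lemma S_le_nonzeroDegree_mul_add {a b : Fin L → ℝ} {D ε : ℝ}
    (hD : ∀ ℓ, ℓ ≠ 0 → d n L a b ℓ ≤ D) (hε : d n L a b 0 ≤ ε) (hε₀ : 0 ≤ ε)
    (w : Edge n → Fin (L + 1)) (i : Fin (2 * n)) (H : Finset (Fin (2 * n))) :
    S n L a b w i H ≤ nonzeroDegree w i H * D + H.card * ε := by
  rw [S, ← sum_filter_add_sum_filter_not (H.erase i) fun j => wfun w i j ≠ 0]
  gcongr
  · simpa [nonzeroDegree] using sum_le_card_nsmul _ _ D fun j hj => hD _ (mem_filter.1 hj).2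
  · calc _ ≤ ((H.erase i).filter fun j => ¬wfun w i j ≠ 0).card • ε :=
          sum_le_card_nsmul _ _ ε fun j hj => by rwa [not_not.1 (mem_filter.1 hj).2]
      _ ≤ H.card * ε := by
          rw [nsmul_eq_mul]
          gcongr
          exact (filter_subset _ _).trans (erase_subset _ _)

variable {a b : Fin L → ℝ} [IsProbabilityMeasure (colDist L a n)]
  [IsProbabilityMeasure (colDist L b n)]

lemma sbm_exists_le_nonzeroDegree_le {H : Finset (Fin (2 * n))} (hH : H ⊆ comA n) (K : ℕ) :
    sbm n L a b {w | ∃ i ∈ H, K ≤ nonzeroDegree w i H} ≤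
      H.card * (H.card * colDist L a n {0}ᶜ) ^ K := by
  set p := colDist L a n {0}ᶜ
  have hcover : {w : Edge n → Fin (L + 1) | ∃ i ∈ H, K ≤ nonzeroDegree w i H} ⊆
      ⋃ i ∈ H, ⋃ T ∈ (H.erase i).powersetCard K, {w | ∀ j ∈ T, wfun w i j ≠ 0} := by
    rintro w ⟨i, hi, hK⟩
    obtain ⟨T, hTsub, hTcard⟩ := exists_subset_card_eq hK
    simp only [Set.mem_iUnion]
    exact ⟨i, hi, T, mem_powersetCard.2 ⟨hTsub.trans (filter_subset _ _), hTcard⟩,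
      fun j hj => (mem_filter.1 (hTsub hj)).2⟩
  calc sbm n L a b {w | ∃ i ∈ H, K ≤ nonzeroDegree w i H}
      ≤ ∑ i ∈ H, ∑ T ∈ (H.erase i).powersetCard K,
          sbm n L a b {w | ∀ j ∈ T, wfun w i j ≠ 0} :=
        (measure_mono hcover).trans <| (measure_biUnion_finset_le _ _).trans <|
          sum_le_sum fun i _ => measure_biUnion_finset_le _ _
    _ ≤ ∑ i ∈ H, ∑ T ∈ (H.erase i).powersetCard K, p ^ K := by
        gcongr with i hi T hT
        obtain ⟨hTH, hTK⟩ := mem_powersetCard.1 hT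
        rw [← hTK]
        exact sbm_forall_wfun_ne_zero_le (hH hi) (fun j hj => hH (mem_of_mem_erase (hTH hj)))
          fun h => by simpa using hTH h
    _ = H.card * ((H.card - 1).choose K * p ^ K) := by
        rw [sum_congr rfl fun i hi => by rw [sum_const, card_powersetCard, card_erase_of_mem hi],
          sum_const, nsmul_eq_mul, nsmul_eq_mul]
    _ ≤ H.card * (H.card * p) ^ K := by
        rw [mul_pow]
        gcongr
        exact_mod_cast (Nat.choose_le_pow _ _).trans (Nat.pow_le_pow_left (Nat.sub_le _ _) _)

end Degree

lemma d_succ {n L : ℕ} {a b : Fin L → ℝ} (hn : Real.log n / n ≠ 0) (j : Fin L) :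
    d n L a b j.succ = Real.log (a j / b j) := by
  rw [d, mass_succ, mass_succ, mul_div_assoc, mul_div_assoc (b j), mul_div_mul_right _ _ hn]

lemma log_div_le_two_mul_one_sub {s t : ℝ} (hs : 0 < s) (hs₁ : s ≤ 1) (ht : 1 / 2 ≤ t)
    (ht₁ : t ≤ 1) : Real.log (s / t) ≤ 2 * (1 - t) := by
  have ht₀ : 0 < t := by linarith
  calc Real.log (s / t) = Real.log s + Real.log t⁻¹ := by
        rw [div_eq_mul_inv, Real.log_mul hs.ne' (inv_ne_zero ht₀.ne')]
    _ ≤ 0 + (t⁻¹ - 1) :=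
        add_le_add (Real.log_nonpos hs.le hs₁) (Real.log_le_sub_one_of_pos (inv_pos.2 ht₀))
    _ = (1 - t) / t := by field_simp; ring
    _ ≤ 2 * (1 - t) := by rw [div_le_iff₀ ht₀]; nlinarith

lemma eventually_mul_le_exp_half (c : ℝ) :
    ∀ᶠ y : ℝ in atTop, c * y ≤ Real.exp (y ^ ((2 : ℝ) / 3) * Real.log y / 2) := by
  filter_upwards [eventually_ge_atTop c, eventually_ge_atTop 1,
    (tendsto_rpow_atTop (by norm_num : (0 : ℝ) < 2 / 3)).eventually_ge_atTop 4]
    with y hyc hy1 hy4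
  have hy0 : 0 < y := by linarith
  have hlog : 0 ≤ Real.log y := Real.log_nonneg hy1
  calc c * y ≤ y * y := by gcongr
    _ = Real.exp (2 * Real.log y) := by
        rw [← Real.exp_log (mul_pos hy0 hy0), Real.log_mul hy0.ne' hy0.ne', two_mul]
    _ ≤ Real.exp (y ^ ((2 : ℝ) / 3) * Real.log y / 2) := by gcongr; nlinarith

lemma eventually_mul_le_rpow_rpow (c : ℝ) :
    ∀ᶠ y : ℝ in atTop, c * y ≤ y ^ (y ^ ((2 : ℝ) / 3)) := by
  filter_upwards [eventually_mul_le_exp_half c, eventually_ge_atTop 1] with y hy hy1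
  rw [Real.rpow_def_of_pos (by linarith), mul_comm (Real.log y)]
  refine hy.trans (Real.exp_le_exp.2 ?_)
  have := mul_nonneg (Real.rpow_nonneg (zero_le_one.trans hy1) ((2 : ℝ) / 3))
    (Real.log_nonneg hy1)
  linarith

lemma eventually_rpow_mul_add_two_le (D : ℝ) :
    ∀ᶠ y : ℝ in atTop, y ^ ((2 : ℝ) / 5) * D + 2 ≤ Real.sqrt y / Real.log y := by
  have hsmall : ∀ᶠ y : ℝ in atTop, Real.log y ≤ y ^ ((1 : ℝ) / 20) := by
    filter_upwards [(isLittleO_log_rpow_atTop (by norm_num : (0 : ℝ) < 1 / 20)).bound one_pos,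
      eventually_ge_atTop 1] with y hy hy1
    simpa [abs_of_nonneg (Real.log_nonneg hy1),
      abs_of_nonneg (Real.rpow_nonneg (zero_le_one.trans hy1) _)] using hy
  filter_upwards [hsmall,
    (tendsto_rpow_atTop (by norm_num : (0 : ℝ) < 1 / 20)).eventually_ge_atTop (|D| + 2),
    Real.tendsto_log_atTop.eventually_gt_atTop 0, eventually_ge_atTop 1]
    with y hlog hD hlog0 hy1
  have hy0 : 0 < y := by linarith
  have h25 : 1 ≤ y ^ ((2 : ℝ) / 5) := Real.one_le_rpow hy1 (by norm_num)
  rw [le_div_iff₀ hlog0, Real.sqrt_eq_rpow]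
  calc (y ^ ((2 : ℝ) / 5) * D + 2) * Real.log y
      ≤ ((|D| + 2) * y ^ ((2 : ℝ) / 5)) * Real.log y := by
        gcongr
        nlinarith [le_abs_self D, abs_nonneg D]
    _ ≤ (y ^ ((1 : ℝ) / 20) * y ^ ((2 : ℝ) / 5)) * y ^ ((1 : ℝ) / 20) := by gcongr
    _ = y ^ ((1 : ℝ) / 2) := by rw [← Real.rpow_add hy0, ← Real.rpow_add hy0]; norm_num

lemma eventually_exp_div_mul_pow_le (c : ℝ) (hc : 0 ≤ c) :
    ∀ᶠ y : ℝ in atTop, Real.exp y / y ^ (y ^ ((2 : ℝ) / 3)) *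
      (c * y / y ^ (y ^ ((2 : ℝ) / 3))) ^ ⌈y ^ ((2 : ℝ) / 5)⌉₊ ≤ 1 / 10 := by
  filter_upwards [eventually_mul_le_exp_half c, eventually_ge_atTop 1,
    eventually_ge_atTop (Real.log 10),
    (tendsto_rpow_atTop (by norm_num : (0 : ℝ) < 1 / 15)).eventually_ge_atTop 4,
    Real.tendsto_log_atTop.eventually_ge_atTop 1] with y hcy hy1 hy10 hy15 hlog
  have hy0 : 0 < y := by linarith
  set G := y ^ ((2 : ℝ) / 3) * Real.log y with hG_def
  set K := ⌈y ^ ((2 : ℝ) / 5)⌉₊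
  have hG : 0 ≤ G := by positivity
  have hKG : y + Real.log 10 ≤ K * G / 2 :=
    calc y + Real.log 10 ≤ y * 4 * 1 / 2 := by linarith
      _ ≤ y * y ^ ((1 : ℝ) / 15) * Real.log y / 2 := by gcongr
      _ = y ^ ((2 : ℝ) / 5) * G / 2 := by
        rw [hG_def, ← mul_assoc, ← Real.rpow_add hy0]
        nth_rewrite 1 [← Real.rpow_one y]
        rw [← Real.rpow_add hy0]
        norm_num
      _ ≤ K * G / 2 := by gcongr; exact Nat.le_ceil _
  have hbase : c * y / Real.exp G ≤ Real.exp (-(G / 2)) := by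
    rw [div_le_iff₀ (Real.exp_pos G), ← Real.exp_add]
    rwa [show -(G / 2) + G = G / 2 by ring]
  rw [Real.rpow_def_of_pos hy0, mul_comm (Real.log y)]
  calc Real.exp y / Real.exp G * (c * y / Real.exp G) ^ K
      ≤ Real.exp y * Real.exp (-(G / 2)) ^ K := by
        gcongr
        exact div_le_self (Real.exp_pos y).le (Real.one_le_exp hG)
    _ = Real.exp (y - K * G / 2) := by
        rw [← Real.exp_nat_mul, ← Real.exp_add]
        congr 1
        ring
    _ ≤ Real.exp (-Real.log 10) := by gcongr; linarith
    _ = 1 / 10 := by rw [Real.exp_neg, Real.exp_log (by norm_num)]; norm_num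

-- Any exponent in `(1/3, 1/2)` works: below `1/2` so that `K · max |log (a_ℓ / b_ℓ)| < δ(n)`,
-- above `1/3` so that `γ(n)^{K/2}` beats `n`.
noncomputable def degreeCutoff (n : ℕ) : ℕ := ⌈Real.log n ^ ((2 : ℝ) / 5)⌉₊

section Eventually

variable {L : ℕ} {a b : Fin L → ℝ}

lemma eventually_S_lt_del (ha : ∀ j, 0 ≤ a j) (hb : ∀ j, 0 ≤ b j) :
    ∀ᶠ n : ℕ in atTop, ∀ H : Finset (Fin (2 * n)), (H.card : ℝ) = n / gam n →
      ∀ w i, nonzeroDegree w i H < degreeCutoff n → S n L a b w i H < del n := by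
  set D := ∑ j, |Real.log (a j / b j)|
  have hlog := Real.tendsto_log_atTop.comp tendsto_natCast_atTop_atTop
  filter_upwards [eventually_gt_atTop 1, eventually_mul_log_div_le (∑ j, a j) one_half_pos,
    eventually_mul_log_div_le (∑ j, b j) one_half_pos,
    hlog.eventually (eventually_mul_le_rpow_rpow (2 * ∑ j, b j)),
    hlog.eventually (eventually_rpow_mul_add_two_le D)] with n hn han hbn hγ hδ
  intro H hcard w i hdeg
  simp only [Function.comp_apply] at hγ hδ
  set x := Real.log n
  have hx : 0 < x := Real.log_pos (by exact_mod_cast hn)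
  have hsa : 0 ≤ ∑ j, a j := sum_nonneg fun j _ => ha j
  have hsb : 0 ≤ ∑ j, b j := sum_nonneg fun j _ => hb j
  have hD : ∀ ℓ, ℓ ≠ 0 → d n L a b ℓ ≤ D := by
    intro ℓ hℓ
    obtain ⟨j, rfl⟩ := Fin.exists_succ_eq.2 hℓ
    rw [d_succ (by positivity)]
    exact (le_abs_self _).trans
      (single_le_sum (f := fun j => |Real.log (a j / b j)|) (fun _ _ => abs_nonneg _)
        (mem_univ j))
  have hε : d n L a b 0 ≤ 2 * ((∑ j, b j) * x / n) := by
    have hpa : 0 ≤ (∑ j, a j) * x / n := by positivity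
    have hpb : 0 ≤ (∑ j, b j) * x / n := by positivity
    have := log_div_le_two_mul_one_sub (s := mass L a n 0) (t := mass L b n 0)
      (by rw [mass_zero]; linarith) (by rw [mass_zero]; linarith)
      (by rw [mass_zero]; linarith) (by rw [mass_zero]; linarith)
    simpa [d] using this
  have hHε : H.card * (2 * ((∑ j, b j) * x / n)) ≤ 1 := by
    have hγ₀ : 0 < gam n := Real.rpow_pos_of_pos hx _
    rw [hcard, div_mul_eq_mul_div, div_le_one hγ₀]
    calc n * (2 * ((∑ j, b j) * x / n)) = 2 * (∑ j, b j) * x := by field_simp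
      _ ≤ gam n := hγ
  have hdeg' : (nonzeroDegree w i H : ℝ) < x ^ ((2 : ℝ) / 5) := Nat.lt_ceil.1 hdeg
  calc S n L a b w i H ≤ nonzeroDegree w i H * D + H.card * (2 * ((∑ j, b j) * x / n)) :=
        S_le_nonzeroDegree_mul_add hD hε (by positivity) w i H
    _ ≤ x ^ ((2 : ℝ) / 5) * D + 1 := by gcongr
    _ < del n := by rw [del]; linarith

lemma eventually_sbm_exists_le_nonzeroDegree_le (ha : ∀ j, 0 ≤ a j) (hb : ∀ j, 0 ≤ b j) :
    ∀ᶠ n : ℕ in atTop, ∀ H ⊆ comA n, (H.card : ℝ) = n / gam n →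
      sbm n L a b {w | ∃ i ∈ H, degreeCutoff n ≤ nonzeroDegree w i H} ≤
        ENNReal.ofReal (1 / 10) := by
  have hlog := Real.tendsto_log_atTop.comp tendsto_natCast_atTop_atTop
  filter_upwards [eventually_isProbabilityMeasure_colDist ha,
    eventually_isProbabilityMeasure_colDist hb, eventually_gt_atTop 0,
    hlog.eventually (eventually_exp_div_mul_pow_le _ (sum_nonneg fun j _ => ha j))]
    with n _ _ hn htail H hH hcard
  simp only [Function.comp_apply] at htail
  have hγ₀ : 0 ≤ gam n := Real.rpow_nonneg (Real.log_natCast_nonneg n) _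
  have hsa : 0 ≤ ∑ j, a j := sum_nonneg fun j _ => ha j
  calc sbm n L a b {w | ∃ i ∈ H, degreeCutoff n ≤ nonzeroDegree w i H}
      ≤ H.card * (H.card * colDist L a n {0}ᶜ) ^ degreeCutoff n :=
        sbm_exists_le_nonzeroDegree_le hH _
    _ = ENNReal.ofReal (n / gam n * ((∑ j, a j) * Real.log n / gam n) ^ degreeCutoff n) := by
        rw [colDist_compl_zero ha, ← ENNReal.ofReal_natCast, hcard, ← ENNReal.ofReal_mul,
          ← ENNReal.ofReal_pow, ← ENNReal.ofReal_mul]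
        · field_simp
        all_goals positivity
    _ ≤ ENNReal.ofReal (1 / 10) := by
        refine ENNReal.ofReal_le_ofReal ?_
        rwa [Real.exp_log (by positivity)] at htail

end Eventually

theorem statement15_general (L : ℕ) (a b : Fin L → ℝ)
    (ha : ∀ ℓ, 0 < a ℓ) (hb : ∀ ℓ, 0 < b ℓ) :
    ∀ᶠ n : ℕ in Filter.atTop, ∀ H : Finset (Fin (2 * n)),
      H ⊆ comA n → (H.card : ℝ) = (n : ℝ) / gam n →
      9 / 10 ≤ (sbm n L a b {w | ∀ i ∈ H, S n L a b w i H < del n}).toReal := by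
  have ha₀ : ∀ ℓ, 0 ≤ a ℓ := fun ℓ => (ha ℓ).le
  have hb₀ : ∀ ℓ, 0 ≤ b ℓ := fun ℓ => (hb ℓ).le
  filter_upwards [eventually_isProbabilityMeasure_colDist ha₀,
    eventually_isProbabilityMeasure_colDist hb₀, eventually_S_lt_del ha₀ hb₀,
    eventually_sbm_exists_le_nonzeroDegree_le ha₀ hb₀] with n _ _ hS hbad H hH hcard
  set Δ := {w | ∀ i ∈ H, S n L a b w i H < del n}
  have hΔc : Δᶜ ⊆ {w | ∃ i ∈ H, degreeCutoff n ≤ nonzeroDegree w i H} := by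
    intro w hw
    obtain ⟨i, hi, hSi⟩ : ∃ i ∈ H, del n ≤ S n L a b w i H := by simpa [Δ] using hw
    exact ⟨i, hi, not_lt.1 fun hlt => (hS H hcard w i hlt).not_ge hSi⟩
  have hΔc_le : (sbm n L a b Δᶜ).toReal ≤ 1 / 10 :=
    ENNReal.toReal_le_of_le_ofReal (by norm_num) ((measure_mono hΔc).trans (hbad H hH hcard))
  have hsum := measureReal_add_measureReal_compl (μ := sbm n L a b)
    (Set.to_countable Δ).measurableSet
  rw [probReal_univ] at hsum
  simp only [measureReal_def] at hsum
  linarith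

theorem statement15 (L : ℕ) (hL : 1 ≤ L) (a b : Fin L → ℝ)
    (ha : ∀ ℓ, 0 < a ℓ) (hb : ∀ ℓ, 0 < b ℓ) :
    ∀ᶠ n : ℕ in Filter.atTop, ∀ H : Finset (Fin (2 * n)),
      H ⊆ comA n → (H.card : ℝ) = (n : ℝ) / gam n →
      9 / 10 ≤ (sbm n L a b {w | ∀ i ∈ H, S n L a b w i H < del n}).toReal :=
  statement15_general L a b ha hb

end SBM15
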